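/- Let L : ℍ → W be an ℝ-linear map that is triholomorphic (L(x) = I(L(i·x)) + J(L(j·x)) + K(L(k·x)) for all x ∈ ℍ) and has rank at most 2. Then there exist a, b, c ∈ ℝ with a² + b² + c² = 1 such that L((a·i + b·j + c·k)·x) = −(a·I + b·J + c·K)(L(x)) for all x ∈ ℍ; i.e., every triholomorphic map of rank at most 2 is (q, −Q)-holomorphic for some unit imaginary quaternion q = a i + b j + c k and Q = a I + b J + c K. (The linear-algebra core of the proposition that each bubble is a holomorphic sphere for some complex structure on the target.) -/

import Mathlib

open scoped Quaternion RealInnerProductSpace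

/-- The quaternion unit `i`. -/
noncomputable def Quat.i : ℍ[ℝ] := ⟨0, 1, 0, 0⟩
/-- The quaternion unit `j`. -/
noncomputable def Quat.j : ℍ[ℝ] := ⟨0, 0, 1, 0⟩
/-- The quaternion unit `k`. -/
noncomputable def Quat.k : ℍ[ℝ] := ⟨0, 0, 0, 1⟩

/-!
For a triholomorphic `L` and a pure imaginary `q`, the defect `D x = L (q x) + Q (L x)` of
`(q, -Q)`-holomorphicity satisfies `D (y x) = y • D x` for every quaternion `y`, where `ℍ` acts on
`W` through `I, J, K`: checking this for `y = i, j` amounts to triholomorphicity at `k x`, `j x`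
and `i x`. So `D` vanishes identically as soon as it vanishes at one nonzero point `h`. Rank at
most `2` supplies such a point: take `h ≠ 0` with `L h = 0`, and then a unit pure imaginary `q`
with `L (q h) = 0`, which exists because `q ↦ L (q h)` maps the three-dimensional space of pure
imaginary quaternions into the range of `L`.
-/

namespace Quat

@[simp] lemma i_re : i.re = 0 := rfl
@[simp] lemma i_imI : i.imI = 1 := rfl
@[simp] lemma i_imJ : i.imJ = 0 := rfl
@[simp] lemma i_imK : i.imK = 0 := rfl
@[simp] lemma j_re : j.re = 0 := rfl
@[simp] lemma j_imI : j.imI = 0 := rfl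
@[simp] lemma j_imJ : j.imJ = 1 := rfl
@[simp] lemma j_imK : j.imK = 0 := rfl
@[simp] lemma k_re : k.re = 0 := rfl
@[simp] lemma k_imI : k.imI = 0 := rfl
@[simp] lemma k_imJ : k.imJ = 0 := rfl
@[simp] lemma k_imK : k.imK = 1 := rfl

@[simp] lemma i_mul_i : i * i = -1 := by ext <;> simp
@[simp] lemma j_mul_j : j * j = -1 := by ext <;> simp
@[simp] lemma k_mul_k : k * k = -1 := by ext <;> simp
@[simp] lemma i_mul_j : i * j = k := by ext <;> simp
@[simp] lemma j_mul_i : j * i = -k := by ext <;> simp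
@[simp] lemma j_mul_k : j * k = i := by ext <;> simp
@[simp] lemma k_mul_j : k * j = -i := by ext <;> simp
@[simp] lemma k_mul_i : k * i = j := by ext <;> simp
@[simp] lemma i_mul_k : i * k = -j := by ext <;> simp

lemma eq_re_add_smul (x : ℍ[ℝ]) :
    x = algebraMap ℝ ℍ[ℝ] x.re + x.imI • i + x.imJ • j + x.imK • k := by
  ext <;> simp

lemma eq_smul_add_of_re_eq_zero {q : ℍ[ℝ]} (hq : q.re = 0) :
    q = q.imI • i + q.imJ • j + q.imK • k := by
  ext <;> simp [hq]

end Quat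

section LiftOfMul

variable {R A : Type*} [CommRing R] [Ring A] [Algebra R A] (I J K : A)
  (hII : I * I = -1) (hJJ : J * J = -1) (hIJ : I * J = K) (hJI : J * I = -K)

def Quaternion.liftOfMul : ℍ[R] →ₐ[R] A :=
  QuaternionAlgebra.Basis.liftHom
    { i := I, j := J, k := K
      i_mul_i := by simp [hII]
      j_mul_j := by simp [hJJ]
      i_mul_j := hIJ
      j_mul_i := by simp [hJI] }

lemma Quaternion.liftOfMul_apply (x : ℍ[R]) :
    Quaternion.liftOfMul I J K hII hJJ hIJ hJI x =
      algebraMap R A x.re + x.imI • I + x.imJ • J + x.imK • K :=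
  rfl

end LiftOfMul

-- Typed on `ℍ[ℝ]` rather than `ℍ[ℝ,-1,0,-1]` so that its kernel inherits the norm of `ℍ`.
abbrev Quaternion.reₗ : ℍ[ℝ] →ₗ[ℝ] ℝ := QuaternionAlgebra.reₗ (-1) 0 (-1)

lemma Quaternion.finrank_ker_reₗ : Module.finrank ℝ (LinearMap.ker Quaternion.reₗ) = 3 := by
  have hsurj : LinearMap.range Quaternion.reₗ = ⊤ :=
    LinearMap.range_eq_top.2 fun r => ⟨algebraMap ℝ ℍ[ℝ] r, rfl⟩
  have := LinearMap.finrank_range_add_finrank_ker Quaternion.reₗ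
  rw [hsurj, finrank_top, Module.finrank_self, Quaternion.finrank_eq_four] at this
  omega

namespace LinearMap

theorem exists_ne_zero_apply_eq_zero_of_rank_lt {K V W : Type*} [DivisionRing K]
    [AddCommGroup V] [Module K V] [AddCommGroup W] [Module K W] [FiniteDimensional K V]
    (f : V →ₗ[K] W) (h : f.rank < Module.finrank K V) : ∃ v ≠ 0, f v = 0 := by
  by_contra! hf
  have hinj : Function.Injective f :=
    (injective_iff_map_eq_zero f).2 fun v hv => by_contra fun hv0 => hf v hv0 hv
  rw [LinearMap.rank, ← Module.finrank_eq_rank, finrank_range_of_inj hinj] at h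
  exact lt_irrefl _ h

theorem exists_norm_eq_one_apply_eq_zero_of_rank_lt {V W : Type*}
    [NormedAddCommGroup V] [NormedSpace ℝ V] [FiniteDimensional ℝ V] [AddCommGroup W]
    [Module ℝ W] (f : V →ₗ[ℝ] W) (h : f.rank < Module.finrank ℝ V) :
    ∃ v, ‖v‖ = 1 ∧ f v = 0 := by
  obtain ⟨v, hv, hfv⟩ := f.exists_ne_zero_apply_eq_zero_of_rank_lt h
  exact ⟨‖v‖⁻¹ • v, norm_smul_inv_norm hv, by rw [map_smul, hfv, smul_zero]⟩

end LinearMap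

section Triholomorphic

variable {W : Type*} [AddCommGroup W] [Module ℝ W] (ρ : ℍ[ℝ] →ₐ[ℝ] Module.End ℝ W)

def IsTriholomorphic (L : ℍ[ℝ] →ₗ[ℝ] W) : Prop :=
  ∀ x, L x = ρ Quat.i (L (Quat.i * x)) + ρ Quat.j (L (Quat.j * x)) + ρ Quat.k (L (Quat.k * x))

noncomputable def holomorphicDefect (L : ℍ[ℝ] →ₗ[ℝ] W) (q : ℍ[ℝ]) : ℍ[ℝ] →ₗ[ℝ] W :=
  L ∘ₗ LinearMap.mulLeft ℝ q + ρ q ∘ₗ L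

variable {ρ} {L : ℍ[ℝ] →ₗ[ℝ] W} {q : ℍ[ℝ]}

lemma holomorphicDefect_apply (x : ℍ[ℝ]) :
    holomorphicDefect ρ L q x = L (q * x) + ρ q (L x) := rfl

lemma algHom_apply_apply (p q : ℍ[ℝ]) (v : W) : ρ p (ρ q v) = ρ (p * q) v := by
  rw [map_mul, Module.End.mul_apply]

namespace IsTriholomorphic

variable (hL : IsTriholomorphic ρ L) (hq : q.re = 0)
include hL hq

lemma holomorphicDefect_i_mul (x : ℍ[ℝ]) :
    holomorphicDefect ρ L q (Quat.i * x) = ρ Quat.i (holomorphicDefect ρ L q x) := by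
  have hj := hL (Quat.j * x)
  have hk := hL (Quat.k * x)
  simp only [← mul_assoc, Quat.i_mul_j, Quat.j_mul_j, Quat.k_mul_j, Quat.i_mul_k, Quat.j_mul_k,
    Quat.k_mul_k, neg_mul, one_mul, map_neg] at hj hk
  rw [Quat.eq_smul_add_of_re_eq_zero hq]
  simp only [holomorphicDefect_apply, add_mul, smul_mul_assoc, ← mul_assoc, map_add, map_smul,
    LinearMap.add_apply, LinearMap.smul_apply, algHom_apply_apply, Quat.i_mul_i, Quat.j_mul_i,
    Quat.k_mul_i, Quat.i_mul_j, Quat.i_mul_k, neg_mul, one_mul, map_neg, map_one,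
    LinearMap.neg_apply, Module.End.one_apply]
  linear_combination (norm := module) q.imK • hj - q.imJ • hk

lemma holomorphicDefect_j_mul (x : ℍ[ℝ]) :
    holomorphicDefect ρ L q (Quat.j * x) = ρ Quat.j (holomorphicDefect ρ L q x) := by
  have hi := hL (Quat.i * x)
  have hk := hL (Quat.k * x)
  simp only [← mul_assoc, Quat.i_mul_i, Quat.j_mul_i, Quat.k_mul_i, Quat.i_mul_k, Quat.j_mul_k,
    Quat.k_mul_k, neg_mul, one_mul, map_neg] at hi hk
  rw [Quat.eq_smul_add_of_re_eq_zero hq]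
  simp only [holomorphicDefect_apply, add_mul, smul_mul_assoc, ← mul_assoc, map_add, map_smul,
    LinearMap.add_apply, LinearMap.smul_apply, algHom_apply_apply, Quat.i_mul_j, Quat.j_mul_j,
    Quat.k_mul_j, Quat.j_mul_i, Quat.j_mul_k, neg_mul, one_mul, map_neg, map_one,
    LinearMap.neg_apply, Module.End.one_apply]
  linear_combination (norm := module) q.imI • hk - q.imK • hi

lemma holomorphicDefect_mul (y x : ℍ[ℝ]) :
    holomorphicDefect ρ L q (y * x) = ρ y (holomorphicDefect ρ L q x) := by
  have hk (x : ℍ[ℝ]) :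
      holomorphicDefect ρ L q (Quat.k * x) = ρ Quat.k (holomorphicDefect ρ L q x) := by
    rw [← Quat.i_mul_j, mul_assoc, hL.holomorphicDefect_i_mul hq, hL.holomorphicDefect_j_mul hq,
      algHom_apply_apply]
  rw [Quat.eq_re_add_smul y]
  simp only [add_mul, smul_mul_assoc, Algebra.algebraMap_eq_smul_one, one_mul, map_add, map_smul,
    hL.holomorphicDefect_i_mul hq, hL.holomorphicDefect_j_mul hq, hk, map_one,
    LinearMap.add_apply, LinearMap.smul_apply, Module.End.one_apply]

end IsTriholomorphic

theorem IsTriholomorphic.exists_holomorphic_of_rank_le_two (hL : IsTriholomorphic ρ L)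
    (hrank : L.rank ≤ 2) : ∃ q : ℍ[ℝ], q.re = 0 ∧ ‖q‖ = 1 ∧ ∀ x, L (q * x) = -ρ q (L x) := by
  obtain ⟨h, hh, hLh⟩ := L.exists_norm_eq_one_apply_eq_zero_of_rank_lt <|
    hrank.trans_lt (by norm_num [Quaternion.finrank_eq_four])
  obtain ⟨⟨q, hq⟩, hq1, hLqh⟩ := (L ∘ₗ LinearMap.mulRight ℝ h ∘ₗ
      (LinearMap.ker Quaternion.reₗ).subtype).exists_norm_eq_one_apply_eq_zero_of_rank_lt <| by
    rw [Quaternion.finrank_ker_reₗ]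
    exact ((LinearMap.rank_comp_le_left _ _).trans hrank).trans_lt (by norm_num)
  refine ⟨q, hq, hq1, fun x => eq_neg_of_add_eq_zero_left ?_⟩
  have hh0 : h ≠ 0 := norm_ne_zero_iff.1 (hh ▸ one_ne_zero)
  calc L (q * x) + ρ q (L x) = holomorphicDefect ρ L q (x * h⁻¹ * h) := by
        rw [inv_mul_cancel_right₀ hh0, holomorphicDefect_apply]
    _ = ρ (x * h⁻¹) (L (q * h) + ρ q (L h)) := hL.holomorphicDefect_mul hq _ _
    _ = 0 := by rw [show L (q * h) = 0 from hLqh, hLh, map_zero, add_zero, map_zero]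

end Triholomorphic


theorem stmt17_general {W : Type*} [NormedAddCommGroup W] [InnerProductSpace ℝ W]
    (I J K : W →ₗ[ℝ] W)
    (hII : I ∘ₗ I = -LinearMap.id) (hJJ : J ∘ₗ J = -LinearMap.id)
    (hIJ : I ∘ₗ J = K) (hJK : J ∘ₗ K = I)
    (L : ℍ[ℝ] →ₗ[ℝ] W)
    (htri : ∀ x : ℍ[ℝ],
      L x = I (L (Quat.i * x)) + J (L (Quat.j * x)) + K (L (Quat.k * x)))
    (hrank : LinearMap.rank L ≤ 2) :
    ∃ a b c : ℝ, a ^ 2 + b ^ 2 + c ^ 2 = 1 ∧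
      ∀ x : ℍ[ℝ],
        L ((a • Quat.i + b • Quat.j + c • Quat.k) * x)
          = -((a • I + b • J + c • K) (L x)) := by
  have hJI : J * I = -K := by
    rw [← hJK, Module.End.mul_eq_comp, ← LinearMap.comp_assoc, hJJ, LinearMap.neg_comp,
      LinearMap.id_comp]
  set ρ := Quaternion.liftOfMul (R := ℝ) I J K hII hJJ hIJ hJI
  have hρ (q : ℍ[ℝ]) (hq : q.re = 0) : ρ q = q.imI • I + q.imJ • J + q.imK • K := by
    rw [Quaternion.liftOfMul_apply, hq, map_zero, zero_add]
  have hL : IsTriholomorphic ρ L := by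
    simpa [IsTriholomorphic, ρ, Quaternion.liftOfMul_apply] using htri
  obtain ⟨q, hq, hq1, hholo⟩ := hL.exists_holomorphic_of_rank_le_two hrank
  refine ⟨q.imI, q.imJ, q.imK, ?_, fun x => ?_⟩
  · have := Quaternion.normSq_eq_norm_mul_self q
    rw [Quaternion.normSq_def', hq, hq1] at this
    linear_combination this
  · rw [← Quat.eq_smul_add_of_re_eq_zero hq, ← hρ q hq, hholo]

/-- every triholomorphic linear map `L : ℍ → W` of rank at most `2` is
`(q, −Q)`-holomorphic for some unit imaginary quaternion `q = a i + b j + c k` and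
`Q = a I + b J + c K`. -/
theorem stmt17 {W : Type*} [NormedAddCommGroup W] [InnerProductSpace ℝ W]
    (I J K : W →ₗ[ℝ] W)
    (hIinner : ∀ v w : W, ⟪I v, I w⟫ = ⟪v, w⟫)
    (hJinner : ∀ v w : W, ⟪J v, J w⟫ = ⟪v, w⟫)
    (hKinner : ∀ v w : W, ⟪K v, K w⟫ = ⟪v, w⟫)
    (hII : I ∘ₗ I = -LinearMap.id) (hJJ : J ∘ₗ J = -LinearMap.id)
    (hKK : K ∘ₗ K = -LinearMap.id)
    (hIJ : I ∘ₗ J = K) (hJK : J ∘ₗ K = I) (hKI : K ∘ₗ I = J)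
    (L : ℍ[ℝ] →ₗ[ℝ] W)
    (htri : ∀ x : ℍ[ℝ],
      L x = I (L (Quat.i * x)) + J (L (Quat.j * x)) + K (L (Quat.k * x)))
    (hrank : LinearMap.rank L ≤ 2) :
    ∃ a b c : ℝ, a ^ 2 + b ^ 2 + c ^ 2 = 1 ∧
      ∀ x : ℍ[ℝ],
        L ((a • Quat.i + b • Quat.j + c • Quat.k) * x)
          = -((a • I + b • J + c • K) (L x)) :=
  stmt17_general I J K hII hJJ hIJ hJK L htri hrank
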